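/- arXiv:1206.0239 — 4 statements merged into one kernel-verified Lean document; each statement's English description precedes it below -/
import Mathlib

section
/- Gauss summation theorem: if a, b, c are real numbers with c > 0 and c − a − b > 0, then the hypergeometric series Σ_{k≥0} ((a)_k (b)_k)/((c)_k k!) converges and its sum satisfies F(a,b;c;1) = Γ(c)Γ(c−a−b)/(Γ(c−a)Γ(c−b)), where Γ is the Gamma function. -/
/-!
The terms `t_k` of the series satisfy `t_{k+1} / t_k = (a+k)(b+k) / ((c+k)(k+1))`, which is
`1 - s/(k+1)` up to `O(k⁻²)` with `s = c + 1 - a - b > 1`; a Raabe-type comparison gives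
`t_k = O(k^{-s'})` for every `s' < s`, hence convergence and `k t_k → 0`. Summing the telescoping
identity behind the contiguous relation `c(c-a-b) F(a,b;c;1) = (c-a)(c-b) F(a,b;c+1;1)` and
iterating it,
`F(a,b;c;1) = ∏_{j<n} (c-a+j)(c-b+j) / ((c+j)(c-a-b+j)) · F(a,b;c+n;1)`.
As `n → ∞`, `F(a,b;c+n;1) → 1` by Tannery's theorem, and the product tends to
`Γ(c)Γ(c-a-b) / (Γ(c-a)Γ(c-b))` by Euler's limit formula for `Γ`.
-/

open Filter Topology Finset Asymptotics

/-- The Gauss (ordinary) hypergeometric function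
`F(a,b;c;z) = ∑_{k≥0} ((a)_k (b)_k)/((c)_k k!) z^k`, with real parameters,
where `(q)_k` is the Pochhammer rising factorial. -/
noncomputable def hypergeom (a b c z : ℝ) : ℝ :=
  ∑' k : ℕ, ((ascPochhammer ℝ k).eval a * (ascPochhammer ℝ k).eval b) /
    ((ascPochhammer ℝ k).eval c * (Nat.factorial k : ℝ)) * z ^ k

lemma one_sub_div_le_rpow_div_add_one {p s : ℝ} (hp : 0 < p) (hs : 0 ≤ s) :
    1 - s / p ≤ (p / (p + 1)) ^ s := by
  have hq : 0 < p / (p + 1) := by positivity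
  have hlog : -(1 / p) ≤ Real.log (p / (p + 1)) := by
    have h := Real.one_sub_inv_le_log_of_pos hq
    rw [inv_div] at h
    have : 1 - (p + 1) / p = -(1 / p) := by field_simp; ring
    linarith
  calc 1 - s / p = 1 + s * -(1 / p) := by ring
    _ ≤ 1 + s * Real.log (p / (p + 1)) := by gcongr
    _ ≤ Real.exp (s * Real.log (p / (p + 1))) := by
      linarith [Real.add_one_le_exp (s * Real.log (p / (p + 1)))]
    _ = (p / (p + 1)) ^ s := by rw [Real.rpow_def_of_pos hq, mul_comm]

lemma isBigO_rpow_of_abs_succ_le {f : ℕ → ℝ} {s : ℝ} (hs : 0 ≤ s)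
    (hf : ∀ᶠ k in atTop, |f (k + 1)| ≤ (1 - s / (k + 1)) * |f k|) :
    f =O[atTop] fun k : ℕ => ((k : ℝ) + 1) ^ (-s) := by
  obtain ⟨J, hJ⟩ := eventually_atTop.mp hf
  have hstep : ∀ k ≥ J,
      |f (k + 1)| * (((k + 1 : ℕ) : ℝ) + 1) ^ s ≤ |f k| * ((k : ℝ) + 1) ^ s := by
    intro k hJk
    have hk : (0 : ℝ) < k + 1 := by positivity
    calc |f (k + 1)| * (((k + 1 : ℕ) : ℝ) + 1) ^ s
        ≤ (1 - s / (k + 1)) * |f k| * ((k + 1 : ℝ) + 1) ^ s := by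
          push_cast; gcongr; exact hJ k hJk
      _ ≤ ((k + 1) / (k + 1 + 1)) ^ s * |f k| * ((k + 1 : ℝ) + 1) ^ s := by
          gcongr; exact one_sub_div_le_rpow_div_add_one hk hs
      _ = |f k| * ((k : ℝ) + 1) ^ s := by
          rw [Real.div_rpow hk.le (by positivity)]
          field_simp
  have hmono : ∀ k ≥ J, |f k| * ((k : ℝ) + 1) ^ s ≤ |f J| * ((J : ℝ) + 1) ^ s := by
    intro k hk
    induction k, hk using Nat.le_induction with
    | base => exact le_rfl
    | succ k hk ih => exact (hstep k hk).trans ih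
  refine IsBigO.of_bound (|f J| * ((J : ℝ) + 1) ^ s) ?_
  filter_upwards [eventually_ge_atTop J] with k hJk
  have hk : (0 : ℝ) < k + 1 := by positivity
  rw [Real.rpow_neg hk.le, Real.norm_eq_abs, Real.norm_eq_abs, abs_inv,
    abs_of_pos (Real.rpow_pos_of_pos hk s), ← div_eq_mul_inv, le_div_iff₀ (by positivity)]
  exact hmono k hJk

lemma summable_add_one_rpow_neg {s : ℝ} (hs : 1 < s) :
    Summable fun k : ℕ => ((k : ℝ) + 1) ^ (-s) := by
  have h := (summable_nat_add_iff 1).mpr (Real.summable_nat_rpow.mpr (by linarith : -s < -1))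
  simpa using h

lemma tendsto_add_one_rpow_neg {s : ℝ} (hs : 0 < s) :
    Tendsto (fun k : ℕ => ((k : ℝ) + 1) ^ (-s)) atTop (𝓝 0) :=
  (tendsto_rpow_neg_atTop hs).comp
    (tendsto_atTop_add_const_right atTop 1 tendsto_natCast_atTop_atTop)

lemma abs_ascPochhammer_eval_le (x : ℝ) (k : ℕ) :
    |(ascPochhammer ℝ k).eval x| ≤ (ascPochhammer ℝ k).eval |x| := by
  induction k with
  | zero => simp
  | succ k ih =>
    rw [ascPochhammer_succ_eval, ascPochhammer_succ_eval, abs_mul]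
    gcongr
    · exact (abs_nonneg _).trans ih
    · exact (abs_add_le _ _).trans_eq (by rw [Nat.abs_cast])

lemma ascPochhammer_eval_le_of_le {x y : ℝ} (hx : 0 < x) (hxy : x ≤ y) (k : ℕ) :
    (ascPochhammer ℝ k).eval x ≤ (ascPochhammer ℝ k).eval y := by
  induction k with
  | zero => simp
  | succ k ih =>
    rw [ascPochhammer_succ_eval, ascPochhammer_succ_eval]
    have := ascPochhammer_pos k y (hx.trans_le hxy)
    gcongr

lemma Real.tendsto_inv_GammaSeq (s : ℝ) :
    Tendsto (fun n => (Real.GammaSeq s n)⁻¹) atTop (𝓝 (Real.Gamma s)⁻¹) := by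
  by_cases hs : Real.Gamma s = 0
  -- At a pole `s = -m`, both `Γ s` and `GammaSeq s n` for `n ≥ m` are the junk value `0`.
  · obtain ⟨m, rfl⟩ := (Real.Gamma_eq_zero_iff s).mp hs
    rw [hs]
    refine tendsto_const_nhds.congr' ?_
    filter_upwards [eventually_ge_atTop m] with n hn
    rw [Real.GammaSeq, prod_eq_zero (mem_range.mpr (Nat.lt_succ_of_le hn)) (neg_add_cancel _),
      div_zero, inv_zero]
  · exact (Real.GammaSeq_tendsto_Gamma s).inv₀ hs

lemma tendsto_prod_range_Gamma_ratio {x y z w : ℝ} (h : x + y = z + w) :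
    Tendsto (fun n => ∏ j ∈ range n, ((x + j) * (y + j)) / ((z + j) * (w + j))) atTop
      (𝓝 (Real.Gamma z * Real.Gamma w / (Real.Gamma x * Real.Gamma y))) := by
  have hlim := ((Real.GammaSeq_tendsto_Gamma z).mul (Real.GammaSeq_tendsto_Gamma w)).mul
    ((Real.tendsto_inv_GammaSeq x).mul (Real.tendsto_inv_GammaSeq y))
  rw [← tendsto_add_atTop_iff_nat 1, div_eq_mul_inv, mul_inv]
  refine hlim.congr' ?_
  filter_upwards [eventually_ge_atTop 1] with n hn
  have hn0 : (0 : ℝ) < n := Nat.cast_pos.mpr hn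
  have hpow : (n : ℝ) ^ z * (n : ℝ) ^ w = (n : ℝ) ^ x * (n : ℝ) ^ y := by
    rw [← Real.rpow_add hn0, ← Real.rpow_add hn0, h]
  set M := (n : ℝ) ^ x * (n : ℝ) ^ y * (n.factorial : ℝ) ^ 2
  have hM : M ≠ 0 := by positivity
  have hzw : Real.GammaSeq z n * Real.GammaSeq w n =
      M / ((∏ j ∈ range (n + 1), (z + j)) * ∏ j ∈ range (n + 1), (w + j)) := by
    simp only [Real.GammaSeq, M, ← hpow]
    ring
  have hxy : (Real.GammaSeq x n)⁻¹ * (Real.GammaSeq y n)⁻¹ =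
      (M / ((∏ j ∈ range (n + 1), (x + j)) * ∏ j ∈ range (n + 1), (y + j)))⁻¹ := by
    simp only [Real.GammaSeq, M]
    ring
  rw [hzw, hxy, ← div_eq_mul_inv, div_div_div_cancel_left' _ _ hM, prod_div_distrib,
    prod_mul_distrib, prod_mul_distrib]

noncomputable def hypergeomTerm (a b c : ℝ) (k : ℕ) : ℝ :=
  ((ascPochhammer ℝ k).eval a * (ascPochhammer ℝ k).eval b) /
    ((ascPochhammer ℝ k).eval c * (Nat.factorial k : ℝ))

lemma hypergeomTerm_succ (a b c : ℝ) (k : ℕ) :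
    hypergeomTerm a b c (k + 1) =
      hypergeomTerm a b c k * ((a + k) * (b + k) / ((c + k) * (k + 1))) := by
  simp only [hypergeomTerm, ascPochhammer_succ_eval, Nat.factorial_succ, Nat.cast_mul,
    Nat.cast_succ, div_mul_div_comm]
  ring_nf

lemma eventually_abs_hypergeomTerm_succ_le (a b c : ℝ) {s : ℝ} (hs : s < c + 1 - a - b) :
    ∀ᶠ k : ℕ in atTop,
      |hypergeomTerm a b c (k + 1)| ≤ (1 - s / (k + 1)) * |hypergeomTerm a b c k| := by
  have hk := tendsto_natCast_atTop_atTop (R := ℝ)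
  filter_upwards [hk.eventually_ge_atTop (-a), hk.eventually_ge_atTop (-b),
    hk.eventually_gt_atTop (-c),
    (hk.const_mul_atTop (by linarith : 0 < c + 1 - s - a - b)).eventually_ge_atTop
      |c * (1 - s) - a * b|] with k ha hb hc hlin
  have hk1 : (0 : ℝ) < k + 1 := by positivity
  have hck : 0 < c + k := by linarith
  have hak : 0 ≤ a + k := by linarith
  have hbk : 0 ≤ b + k := by linarith
  rw [hypergeomTerm_succ, abs_mul, mul_comm, abs_of_nonneg (by positivity)]
  gcongr
  rw [div_le_iff₀ (by positivity)]
  have : (1 - s / (k + 1)) * ((c + k) * (k + 1)) = (c + k) * (k + 1 - s) := by field_simp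
  rw [this]
  nlinarith [neg_abs_le (c * (1 - s) - a * b)]

lemma hypergeomTerm_isBigO (a b c : ℝ) {s : ℝ} (hs0 : 0 ≤ s) (hs : s < c + 1 - a - b) :
    hypergeomTerm a b c =O[atTop] fun k : ℕ => ((k : ℝ) + 1) ^ (-s) :=
  isBigO_rpow_of_abs_succ_le hs0 (eventually_abs_hypergeomTerm_succ_le a b c hs)

lemma summable_hypergeomTerm {a b c : ℝ} (h : 0 < c - a - b) : Summable (hypergeomTerm a b c) :=
  summable_of_isBigO_nat (summable_add_one_rpow_neg (s := 1 + (c - a - b) / 2) (by linarith))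
    (hypergeomTerm_isBigO a b c (by linarith) (by linarith))

lemma tendsto_natCast_mul_hypergeomTerm {a b c : ℝ} (h : 0 < c - a - b) :
    Tendsto (fun k : ℕ => (k : ℝ) * hypergeomTerm a b c k) atTop (𝓝 0) := by
  obtain ⟨s, hs1, hs⟩ : ∃ s, 1 < s ∧ s < c + 1 - a - b :=
    ⟨1 + (c - a - b) / 2, by linarith, by linarith⟩
  have hO : (fun k : ℕ => (k : ℝ) * hypergeomTerm a b c k) =O[atTop]
      fun k : ℕ => ((k : ℝ) + 1) * ((k : ℝ) + 1) ^ (-s) :=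
    (IsBigO.of_bound 1 (Eventually.of_forall fun k => by
      simp only [Real.norm_eq_abs, one_mul]
      rw [abs_of_nonneg (by positivity), abs_of_nonneg (by positivity)]
      linarith)).mul (hypergeomTerm_isBigO a b c (by positivity) (by linarith))
  refine hO.trans_tendsto ((tendsto_add_one_rpow_neg (s := s - 1) (by linarith)).congr fun k => ?_)
  rw [neg_sub, Real.rpow_sub (by positivity), Real.rpow_one, Real.rpow_neg (by positivity)]
  ring

lemma add_mul_hypergeomTerm_add_one {c : ℝ} (hc : 0 < c) (a b : ℝ) (k : ℕ) :
    (c + k) * hypergeomTerm a b (c + 1) k = c * hypergeomTerm a b c k := by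
  have hP : (ascPochhammer ℝ k).eval c * (c + k) = c * (ascPochhammer ℝ k).eval (c + 1) := by
    rw [← ascPochhammer_succ_eval, ascPochhammer_succ_left, Polynomial.eval_mul,
      Polynomial.eval_X, Polynomial.eval_comp, Polynomial.eval_add, Polynomial.eval_X,
      Polynomial.eval_one]
  have h1 := ascPochhammer_pos k c hc
  have h2 := ascPochhammer_pos k (c + 1) (by linarith)
  simp only [hypergeomTerm]
  field_simp
  linear_combination (ascPochhammer ℝ k).eval a * (ascPochhammer ℝ k).eval b * hP

lemma hypergeomTerm_contiguous {c : ℝ} (hc : 0 < c) (a b : ℝ) (k : ℕ) :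
    c * (c - a - b) * hypergeomTerm a b c k - (c - a) * (c - b) * hypergeomTerm a b (c + 1) k =
      c * (k * hypergeomTerm a b c k) - c * ((k + 1 : ℕ) * hypergeomTerm a b c (k + 1)) := by
  have hck : 0 < c + k := by positivity
  have h := add_mul_hypergeomTerm_add_one hc a b k
  rw [hypergeomTerm_succ, eq_div_of_mul_eq hck.ne' ((mul_comm _ _).trans h)]
  push_cast
  field_simp
  ring

lemma tsum_hypergeomTerm_contiguous {a b c : ℝ} (hc : 0 < c) (h : 0 < c - a - b) :
    c * (c - a - b) * ∑' k, hypergeomTerm a b c k =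
      (c - a) * (c - b) * ∑' k, hypergeomTerm a b (c + 1) k := by
  have hsum := ((summable_hypergeomTerm h).hasSum.mul_left (c * (c - a - b))).sub
    ((summable_hypergeomTerm (by linarith : 0 < c + 1 - a - b)).hasSum.mul_left ((c - a) * (c - b)))
  have hpartial : Tendsto (fun n => ∑ k ∈ range n, (c * (c - a - b) * hypergeomTerm a b c k -
      (c - a) * (c - b) * hypergeomTerm a b (c + 1) k)) atTop (𝓝 0) := by
    simp_rw [hypergeomTerm_contiguous hc, Finset.sum_range_sub']
    simpa using ((tendsto_natCast_mul_hypergeomTerm h).const_mul c).neg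
  exact sub_eq_zero.mp (tendsto_nhds_unique hsum.tendsto_sum_nat hpartial)

lemma tsum_hypergeomTerm_eq_prod_mul {a b c : ℝ} (hc : 0 < c) (h : 0 < c - a - b) (n : ℕ) :
    ∑' k, hypergeomTerm a b c k =
      (∏ j ∈ range n, ((c - a + j) * (c - b + j)) / ((c + j) * (c - a - b + j))) *
        ∑' k, hypergeomTerm a b (c + n) k := by
  induction n with
  | zero => simp
  | succ n ih =>
    have hcn : 0 < c + n := by positivity
    have hcnab : 0 < c + n - a - b := by linarith [(Nat.cast_nonneg n : (0 : ℝ) ≤ n)]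
    have step := tsum_hypergeomTerm_contiguous hcn hcnab
    rw [ih, prod_range_succ, mul_assoc, Nat.cast_succ, ← add_assoc,
      eq_div_of_mul_eq (by positivity) ((mul_comm _ _).trans step)]
    field_simp
    ring

lemma abs_hypergeomTerm_le {a b c c' : ℝ} (hc : 0 < c) (hcc' : c ≤ c') (k : ℕ) :
    |hypergeomTerm a b c' k| ≤ hypergeomTerm |a| |b| c k := by
  have hP := ascPochhammer_pos k c hc
  have hP' := ascPochhammer_pos k c' (hc.trans_le hcc')
  rw [hypergeomTerm, hypergeomTerm, abs_div, abs_mul, abs_mul, abs_of_pos hP', Nat.abs_cast]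
  have ha := abs_ascPochhammer_eval_le a k
  have hb := abs_ascPochhammer_eval_le b k
  have ha0 := (abs_nonneg _).trans ha
  have hb0 := (abs_nonneg _).trans hb
  have := ascPochhammer_eval_le_of_le hc hcc' k
  gcongr

lemma tendsto_hypergeomTerm_add_nat (a b c : ℝ) (k : ℕ) :
    Tendsto (fun n : ℕ => hypergeomTerm a b (c + n) k) atTop (𝓝 (if k = 0 then 1 else 0)) := by
  rcases Nat.eq_zero_or_pos k with rfl | hk
  · simp [hypergeomTerm]
  have hdeg : 0 < (ascPochhammer ℝ k).degree := by
    rw [← Polynomial.natDegree_pos_iff_degree_pos, ascPochhammer_natDegree]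
    exact hk
  have hpoch : Tendsto (fun x : ℝ => (ascPochhammer ℝ k).eval x) atTop atTop :=
    Polynomial.tendsto_atTop_of_leadingCoeff_nonneg _ hdeg
      ((monic_ascPochhammer ℝ k).leadingCoeff ▸ zero_le_one)
  have hden := (hpoch.comp (tendsto_atTop_add_const_left atTop c tendsto_natCast_atTop_atTop))
    |>.atTop_mul_const (Nat.cast_pos.mpr k.factorial_pos : (0 : ℝ) < k.factorial)
  simpa [hypergeomTerm, hk.ne'] using tendsto_const_nhds.div_atTop hden

lemma tendsto_tsum_hypergeomTerm_add_nat (a b c : ℝ) :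
    Tendsto (fun n : ℕ => ∑' k, hypergeomTerm a b (c + n) k) atTop (𝓝 1) := by
  obtain ⟨m, hm⟩ := exists_nat_ge (|a| + |b| + 1 - c)
  have hdom := tendsto_tsum_of_dominated_convergence
    (summable_hypergeomTerm (by linarith : 0 < c + m - |a| - |b|))
    (tendsto_hypergeomTerm_add_nat a b c) ?_
  · simpa using hdom
  filter_upwards [eventually_ge_atTop m] with n hn k
  exact abs_hypergeomTerm_le (by linarith [abs_nonneg a, abs_nonneg b])
    (by gcongr) k

/-- Gauss summation theorem: if `a, b, c` are real with `c > 0` and `c − a − b > 0`,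
then the hypergeometric series `∑_{k≥0} ((a)_k (b)_k)/((c)_k k!)` converges and
`F(a,b;c;1) = Γ(c)Γ(c−a−b)/(Γ(c−a)Γ(c−b))`. -/
theorem stmt_1 (a b c : ℝ) (hc : 0 < c) (h : 0 < c - a - b) :
    Summable (fun k : ℕ =>
      ((ascPochhammer ℝ k).eval a * (ascPochhammer ℝ k).eval b) /
        ((ascPochhammer ℝ k).eval c * (Nat.factorial k : ℝ)))
    ∧ hypergeom a b c 1 =
        Real.Gamma c * Real.Gamma (c - a - b) /
          (Real.Gamma (c - a) * Real.Gamma (c - b)) := by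
  refine ⟨summable_hypergeomTerm h, ?_⟩
  have hF : hypergeom a b c 1 = ∑' k, hypergeomTerm a b c k := by
    simp [hypergeom, hypergeomTerm]
  have hlim := (tendsto_prod_range_Gamma_ratio (by ring : c - a + (c - b) = c + (c - a - b))).mul
    (tendsto_tsum_hypergeomTerm_add_nat a b c)
  rw [mul_one] at hlim
  rw [hF]
  exact tendsto_nhds_unique tendsto_const_nhds
    (hlim.congr fun n => (tsum_hypergeomTerm_eq_prod_mul hc h n).symm)
end

section
/- One has the logarithmic boundary asymptotic lim_{z→1⁻} F(1/2, 1/2; 1; z) / ln(1−z) = −1/π, i.e. the function z ↦ F(1/2,1/2;1;z)·(1/ln(1−z)) tends to −1/π as z tends to 1 from the left within (0,1). -/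
open Real Filter

noncomputable def pHalf (k : ℕ) : ℝ := ((2*k).factorial : ℝ) / (4^k * k.factorial)

lemma poch_half (k : ℕ) : (ascPochhammer ℝ k).eval (1/2 : ℝ) = pHalf k := by
  induction k with
  | zero => simp [pHalf]
  | succ n ih =>
    rw [ascPochhammer_succ_eval, ih]
    unfold pHalf
    have h4 : (4:ℝ)^n ≠ 0 := by positivity
    have hf : (n.factorial : ℝ) ≠ 0 := Nat.cast_ne_zero.mpr n.factorial_ne_zero
    have h1 : ((2*(n+1)).factorial : ℝ) = (2*n+2) * ((2*n+1) * (2*n).factorial) := by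
      have : 2*(n+1) = (2*n+1)+1 := by ring
      rw [this, Nat.factorial_succ, Nat.factorial_succ]; push_cast; ring
    have h2 : ((n+1).factorial : ℝ) = (n+1) * n.factorial := by
      rw [Nat.factorial_succ]; push_cast; ring
    rw [h1, h2]
    field_simp
    ring

lemma poch_one (k : ℕ) : (ascPochhammer ℝ k).eval (1 : ℝ) = k.factorial := by
  induction k with
  | zero => simp
  | succ n ih =>
    rw [ascPochhammer_succ_eval, ih, Nat.factorial_succ]
    push_cast; ring

noncomputable def cc (k : ℕ) : ℝ := (pHalf k)^2 / (k.factorial : ℝ)^2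

lemma cc_eq_W (k : ℕ) : cc k * (Real.Wallis.W k * (2*k+1)) = 1 := by
  rw [Real.Wallis.W_eq_factorial_ratio]
  unfold cc pHalf
  have h1 : ((2*k).factorial : ℝ) ≠ 0 := Nat.cast_ne_zero.mpr (Nat.factorial_ne_zero _)
  have h2 : (k.factorial : ℝ) ≠ 0 := Nat.cast_ne_zero.mpr (Nat.factorial_ne_zero _)
  have h3 : (2:ℝ)^(4*k) = (4:ℝ)^k * 4^k := by
    rw [← pow_add, show (4:ℝ) = 2^2 by norm_num, ← pow_mul]; ring_nf
  have h4 : ((2:ℝ)*k+1) ≠ 0 := by positivity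
  rw [h3]
  field_simp

lemma cc_pos (k : ℕ) : 0 < cc k := by
  unfold cc pHalf
  have := Nat.factorial_pos (2*k)
  have := Nat.factorial_pos k
  positivity

lemma cc_lower (k : ℕ) : 2/(π*(2*k+1)) ≤ cc k := by
  have hW := Real.Wallis.W_le k
  have hWp := Real.Wallis.W_pos k
  have h1 : (0:ℝ) < 2*k+1 := by positivity
  have he := cc_eq_W k
  have hc := cc_pos k
  rw [div_le_iff₀ (by positivity)]
  calc 2 = 2 * (cc k * (Real.Wallis.W k * (2*k+1))) := by rw [he]; ring
    _ ≤ 2 * (cc k * ((π/2) * (2*k+1))) := by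
        gcongr
    _ = cc k * (π * (2*k+1)) := by ring

lemma cc_upper (k : ℕ) : cc k ≤ 2*(2*k+2)/(π*(2*k+1)^2) := by
  have hW := Real.Wallis.le_W k
  have h1 : (0:ℝ) < 2*k+1 := by positivity
  have h2 : (0:ℝ) < 2*k+2 := by positivity
  have he := cc_eq_W k
  have hc := cc_pos k
  rw [le_div_iff₀ (by positivity)]
  calc cc k * (π*(2*k+1)^2)
      = cc k * (((2*k+1)/(2*k+2) * (π/2)) * (2*k+1)) * (2*(2*k+2)) := by field_simp
    _ ≤ cc k * (Real.Wallis.W k * (2*k+1)) * (2*(2*k+2)) := by gcongr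
    _ = 2*(2*k+2) := by rw [he]; ring

lemma cc_err {k : ℕ} (hk : 1 ≤ k) : |cc k - 1/(π*k)| ≤ 1/(k:ℝ)^2 := by
  have hkR : (1:ℝ) ≤ (k:ℝ) := by exact_mod_cast hk
  have hkp : (0:ℝ) < k := by linarith
  have hπ : (3:ℝ) < π := Real.pi_gt_three
  have hπp : (0:ℝ) < π := Real.pi_pos
  have key2 : cc k ≤ 1/(π*k) := by
    refine le_trans (cc_upper k) ?_
    rw [div_le_div_iff₀ (by positivity) (by positivity)]
    nlinarith
  have key1 : 1/(π*(k:ℝ)) - 1/(k:ℝ)^2 ≤ cc k := by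
    have e1 : 1/(π*(k:ℝ)) - 2/(π*(2*k+1)) = 1/(π*((k:ℝ)*(2*k+1))) := by
      field_simp; ring
    have e2 : 1/(π*((k:ℝ)*(2*k+1))) ≤ 1/(k:ℝ)^2 := by
      apply one_div_le_one_div_of_le (by positivity)
      nlinarith
    have := cc_lower k
    have : 1/(π*(k:ℝ)) - 1/(k:ℝ)^2 ≤ 2/(π*(2*(k:ℝ)+1)) := by linarith [e1 ▸ e2]
    linarith [cc_lower k]
  have h0 : (0:ℝ) ≤ 1/(k:ℝ)^2 := by positivity
  rw [abs_le]
  constructor <;> linarith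

lemma cc_zero : cc 0 = 1 := by simp [cc, pHalf]

lemma cc_le_one (k : ℕ) : cc k ≤ 1 := by
  rcases Nat.eq_zero_or_pos k with h | h
  · simp [h, cc_zero]
  · have hkR : (1:ℝ) ≤ (k:ℝ) := by exact_mod_cast h
    have hπ : (3:ℝ) < π := Real.pi_gt_three
    refine le_trans (cc_upper k) ?_
    rw [div_le_one (by positivity)]
    nlinarith

lemma hasSum_hyp {z : ℝ} (hz : z ∈ Set.Ioo (0:ℝ) 1) :
    HasSum (fun k => cc k * z ^ k) (hypergeom (1/2) (1/2) 1 z) := by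
  have hz0 : 0 ≤ z := hz.1.le
  have hsm : Summable (fun k => cc k * z ^ k) := by
    refine Summable.of_nonneg_of_le
      (fun k => mul_nonneg (cc_pos k).le (by positivity)) (fun k => ?_)
      (summable_geometric_of_lt_one hz0 hz.2)
    calc cc k * z ^ k ≤ 1 * z ^ k := by gcongr; exact cc_le_one k
      _ = z ^ k := one_mul _
  have he : hypergeom (1/2) (1/2) 1 z = ∑' k, cc k * z ^ k := by
    unfold hypergeom
    refine tsum_congr fun k => ?_
    rw [poch_half, poch_one, cc]
    ring
  rw [he]
  exact hsm.hasSum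

lemma hasSum_log {z : ℝ} (hz : z ∈ Set.Ioo (0:ℝ) 1) :
    HasSum (fun k : ℕ => z ^ k / k) (-Real.log (1-z)) := by
  have habs : |z| < 1 := by rw [abs_lt]; constructor <;> [linarith [hz.1]; exact hz.2]
  have h := Real.hasSum_pow_div_log_of_abs_lt_one habs
  have h' : HasSum (fun n : ℕ => z ^ (n+1) / ((n+1 : ℕ) : ℝ)) (-Real.log (1-z)) := by
    refine h.congr_fun fun n => ?_
    push_cast; ring
  have h2 := (hasSum_nat_add_iff (f := fun k : ℕ => z ^ k / (k : ℝ)) 1).mp h'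
  simpa using h2

noncomputable def bb (k : ℕ) : ℝ := if k = 0 then 1 else 1/(k:ℝ)^2

lemma bb_summable : Summable bb := by
  have h2 : Summable (fun n : ℕ => 1/(n:ℝ)^2) := Real.summable_one_div_nat_pow.mpr one_lt_two
  have h3 : Summable (fun n : ℕ => bb (n+1)) := by
    refine ((summable_nat_add_iff (f := fun n : ℕ => 1/(n:ℝ)^2) 1).mpr h2).congr fun n => ?_
    simp [bb]
  exact (summable_nat_add_iff 1).mp h3

lemma term_bound {z : ℝ} (hz : z ∈ Set.Ioo (0:ℝ) 1) (k : ℕ) :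
    |cc k * z ^ k - (1/π) * (z ^ k / k)| ≤ bb k := by
  have hz0 : 0 ≤ z := hz.1.le
  have hzk : z ^ k ≤ 1 := pow_le_one₀ hz0 hz.2.le
  have hzk0 : 0 ≤ z ^ k := by positivity
  have he : cc k * z ^ k - (1/π) * (z ^ k / k) = (cc k - 1/(π*k)) * z ^ k := by ring
  rw [he, abs_mul, abs_of_nonneg hzk0]
  rcases Nat.eq_zero_or_pos k with h | h
  · subst h
    simp [cc_zero, bb]
  · have := cc_err h
    have hb : bb k = 1/(k:ℝ)^2 := by simp [bb, h.ne']
    rw [hb]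
    calc |cc k - 1/(π*k)| * z ^ k ≤ |cc k - 1/(π*k)| * 1 := by gcongr
      _ = |cc k - 1/(π*k)| := mul_one _
      _ ≤ 1/(k:ℝ)^2 := cc_err h

lemma g_bound {z : ℝ} (hz : z ∈ Set.Ioo (0:ℝ) 1) :
    |hypergeom (1/2) (1/2) 1 z + (1/π) * Real.log (1-z)| ≤ ∑' k, bb k := by
  have h1 := hasSum_hyp hz
  have h2 := (hasSum_log hz).mul_left (1/π)
  have h3 := h1.sub h2
  have hv : hypergeom (1/2) (1/2) 1 z - (1/π) * -Real.log (1-z)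
      = hypergeom (1/2) (1/2) 1 z + (1/π) * Real.log (1-z) := by ring
  rw [hv] at h3
  have habs : ∀ k, |cc k * z ^ k - (1/π) * (z ^ k / k)| ≤ bb k := term_bound hz
  have hsum_abs : Summable (fun k => |cc k * z ^ k - (1/π) * (z ^ k / k)|) :=
    Summable.of_nonneg_of_le (fun k => abs_nonneg _) habs bb_summable
  calc |hypergeom (1/2) (1/2) 1 z + (1/π) * Real.log (1-z)|
      = |∑' k, (cc k * z ^ k - (1/π) * (z ^ k / k))| := by rw [h3.tsum_eq]
    _ ≤ ∑' k, |cc k * z ^ k - (1/π) * (z ^ k / k)| := by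
        have hs2 : Summable (fun k => ‖cc k * z ^ k - (1/π) * (z ^ k / k)‖) := by
          simp only [Real.norm_eq_abs]; exact hsum_abs
        have h4 := norm_tsum_le_tsum_norm hs2
        simp only [Real.norm_eq_abs] at h4
        exact h4
    _ ≤ ∑' k, bb k := Summable.tsum_le_tsum habs hsum_abs bb_summable

/-- Logarithmic boundary asymptotic: `lim_{z→1⁻} F(1/2, 1/2; 1; z) / ln(1−z) = −1/π`,
the limit being taken as `z` tends to `1` from the left within `(0,1)`. -/
theorem stmt_4 :
    Tendsto (fun z : ℝ => hypergeom (1/2) (1/2) 1 z * (1 / Real.log (1 - z)))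
      (nhdsWithin 1 (Set.Ioo (0:ℝ) 1)) (nhds (-(1 / π))) := by
  set l := nhdsWithin (1:ℝ) (Set.Ioo (0:ℝ) 1)
  have hmem : ∀ᶠ z in l, z ∈ Set.Ioo (0:ℝ) 1 := eventually_mem_nhdsWithin
  have tlog : Tendsto (fun z : ℝ => Real.log (1 - z)) l atBot := by
    have t1 : Tendsto (fun z : ℝ => 1 - z) l (nhdsWithin (0:ℝ) (Set.Ioi 0)) := by
      apply tendsto_nhdsWithin_of_tendsto_nhds_of_eventually_within
      · have hc : Continuous (fun z : ℝ => 1 - z) := by continuity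
        have h0 : Tendsto (fun z : ℝ => 1 - z) l (nhds (1 - 1)) :=
          ((hc.tendsto 1).mono_left nhdsWithin_le_nhds)
        rw [sub_self] at h0
        exact h0
      · filter_upwards [hmem] with z hz
        simp only [Set.mem_Ioi]
        linarith [hz.2]
    exact Real.tendsto_log_nhdsGT_zero.comp t1
  have tinv : Tendsto (fun z : ℝ => 1 / Real.log (1 - z)) l (nhds 0) := by
    have t2 : Tendsto (fun z : ℝ => -Real.log (1 - z)) l atTop := tendsto_neg_atTop_iff.mpr tlog
    have t3 := t2.inv_tendsto_atTop
    have : (fun z : ℝ => 1 / Real.log (1 - z)) = fun z => -((fun z : ℝ => -Real.log (1 - z))⁻¹ z) := by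
      funext z; simp [one_div, inv_neg]
    rw [this]
    simpa using t3.neg
  have tg : Tendsto (fun z : ℝ =>
      (hypergeom (1/2) (1/2) 1 z + (1/π) * Real.log (1-z)) * (1 / Real.log (1 - z))) l (nhds 0) := by
    apply squeeze_zero_norm' (a := fun z : ℝ => (∑' k, bb k) * |1 / Real.log (1 - z)|)
    · filter_upwards [hmem] with z hz
      rw [Real.norm_eq_abs, abs_mul]
      exact mul_le_mul_of_nonneg_right (g_bound hz) (abs_nonneg _)
    · have := (tinv.abs).const_mul (∑' k, bb k)
      simpa using this
  have heq : ∀ᶠ z in l, (hypergeom (1/2) (1/2) 1 z + (1/π) * Real.log (1-z)) * (1 / Real.log (1 - z))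
      - 1/π = hypergeom (1/2) (1/2) 1 z * (1 / Real.log (1 - z)) := by
    filter_upwards [hmem] with z hz
    have h1 : Real.log (1 - z) ≠ 0 :=
      (Real.log_neg (by linarith [hz.2]) (by linarith [hz.1])).ne
    have h2 : π ≠ 0 := Real.pi_ne_zero
    field_simp
    ring
  have := (tg.sub_const (1/π)).congr' heq
  simpa using this
end

section
/- For every ε ∈ (0,1), as t → +∞ the functions s ↦ (8e^{3t}/(1 + 2e^{t} + e^{2t}(1−s²))²) · F(3/2, 3/2; 2; ((1−e^{−t})² − s²)/((1+e^{−t})² − s²)) converge uniformly on the interval [0, 1−ε] to the function s ↦ 8/(π(1−s²)). -/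
open Real Filter

/-! The coefficients of `F(3/2, 3/2; 2; z)` are `(2k+1)/((k+1) W_k)` with `W_k` the Wallis
partial products, so they tend to `4/π`; Abel's theorem applied to their successive differences
gives `(1 - z) F(z) → 4/π` as `z → 1⁻`. With `x = e^{-t}` and `D = (1+x)² - s²` one has
`1 - z = 4x/D`, and the kernel equals `2 (1 - z) F(z) / D`, which therefore tends to
`8/(π(1 - s₀²))` as `t → ∞` and `s → s₀` jointly. On a compact set of `s` in `(-1, 1)`, joint
convergence at every point gives uniform convergence. -/

open Topology

noncomputable def hypergeomCoeff (a b c : ℝ) (k : ℕ) : ℝ :=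
  ((ascPochhammer ℝ k).eval a * (ascPochhammer ℝ k).eval b) /
    ((ascPochhammer ℝ k).eval c * (k.factorial : ℝ))

theorem hypergeom_eq_tsum (a b c z : ℝ) :
    hypergeom a b c z = ∑' k, hypergeomCoeff a b c k * z ^ k := rfl

theorem hypergeomCoeff_zero (a b c : ℝ) : hypergeomCoeff a b c 0 = 1 := by
  simp [hypergeomCoeff]

theorem hypergeomCoeff_succ (a b c : ℝ) (k : ℕ) :
    hypergeomCoeff a b c (k + 1) =
      hypergeomCoeff a b c k * ((a + k) * (b + k) / ((c + k) * (k + 1))) := by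
  simp only [hypergeomCoeff, ascPochhammer_succ_eval, Nat.factorial_succ, Nat.cast_mul,
    Nat.cast_succ, div_mul_div_comm]
  ring

open Real.Wallis in
theorem hypergeomCoeff_three_halves_eq (k : ℕ) :
    hypergeomCoeff (3/2) (3/2) 2 k = (2 * k + 1) / ((k + 1) * W k) := by
  induction k with
  | zero => simp [hypergeomCoeff_zero, W]
  | succ k ih =>
    have := W_pos k
    rw [hypergeomCoeff_succ, ih, W_succ]
    push_cast
    field_simp
    ring

open Real.Wallis in
theorem tendsto_hypergeomCoeff_three_halves :
    Tendsto (hypergeomCoeff (3/2) (3/2) 2) atTop (𝓝 (4 / π)) := by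
  have hratio : Tendsto (fun k : ℕ => (2 * k + 1 : ℝ) / (k + 1)) atTop (𝓝 2) := by
    have := tendsto_one_div_add_atTop_nhds_zero_nat.const_sub (2 : ℝ)
    rw [sub_zero] at this
    refine this.congr fun k => ?_
    field_simp
    ring
  have hlim := hratio.div tendsto_W_nhds_pi_div_two (by positivity)
  convert hlim using 2
  · ext k
    simp [hypergeomCoeff_three_halves_eq, div_div]
  · field_simp
    ring

theorem hasSum_one_sub_mul_powerSeries {c : ℕ → ℝ} {x S : ℝ}
    (hS : HasSum (fun n => c n * x ^ n) S) :
    HasSum (fun n => (c n - if n = 0 then 0 else c (n - 1)) * x ^ n) ((1 - x) * S) := by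
  have hshift : HasSum (fun n => (if n = 0 then 0 else c (n - 1)) * x ^ n) (x * S) := by
    rw [← hasSum_nat_add_iff' 1]
    simpa [pow_succ, mul_left_comm, mul_comm] using hS.mul_left x
  simpa [sub_mul, one_sub_mul] using hS.sub hshift

theorem Real.tendsto_one_sub_mul_tsum_powerSeries_nhdsWithin_lt {c : ℕ → ℝ} {l : ℝ}
    (h : Tendsto c atTop (𝓝 l)) :
    Tendsto (fun x => (1 - x) * ∑' n, c n * x ^ n) (𝓝[<] 1) (𝓝 l) := by
  set d : ℕ → ℝ := fun n => c n - if n = 0 then 0 else c (n - 1)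
  have htelescope (n : ℕ) : ∑ i ∈ Finset.range (n + 1), d i = c n := by
    induction n with
    | zero => simp [d]
    | succ n ih => simp [Finset.sum_range_succ _ (n + 1), ih, d]
  have hpartial : Tendsto (fun n => ∑ i ∈ Finset.range n, d i) atTop (𝓝 l) := by
    rw [← tendsto_add_atTop_iff_nat 1]
    simpa only [htelescope] using h
  refine (Real.tendsto_tsum_powerSeries_nhdsWithin_lt hpartial).congr' ?_
  filter_upwards [Ioo_mem_nhdsLT (show (-1 : ℝ) < 1 by norm_num)] with x hx
  obtain ⟨C, hC⟩ := h.norm.bddAbove_range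
  have hsum : Summable (fun n => c n * x ^ n) := by
    have hgeom := summable_geometric_of_lt_one (abs_nonneg x) (abs_lt.2 hx)
    refine .of_norm_bounded (hgeom.mul_left C) fun n => ?_
    rw [norm_mul, norm_pow, Real.norm_eq_abs]
    exact mul_le_mul_of_nonneg_right (hC ⟨n, rfl⟩) (by positivity)
  exact (hasSum_one_sub_mul_powerSeries hsum.hasSum).tsum_eq

theorem tendsto_one_sub_mul_hypergeom_three_halves :
    Tendsto (fun z => (1 - z) * hypergeom (3/2) (3/2) 2 z) (𝓝[<] 1) (𝓝 (4 / π)) := by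
  simpa only [hypergeom_eq_tsum] using
    Real.tendsto_one_sub_mul_tsum_powerSeries_nhdsWithin_lt tendsto_hypergeomCoeff_three_halves

theorem IsCompact.tendstoUniformlyOn_of_forall_tendsto {ι α β : Type*} [TopologicalSpace α]
    [UniformSpace β] {F : ι → α → β} {f : α → β} {p : Filter ι} {K : Set α} (hK : IsCompact K)
    (hf : ContinuousOn f K) (h : ∀ x ∈ K, Tendsto ↿F (p ×ˢ 𝓝[K] x) (𝓝 (f x))) :
    TendstoUniformlyOn F f p K := by
  rw [← tendstoLocallyUniformlyOn_iff_tendstoUniformlyOn_of_compact hK,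
    tendstoLocallyUniformlyOn_iff_forall_tendsto]
  exact fun x hx => (((hf x hx).tendsto.comp tendsto_snd).prodMk_nhds (h x hx)).mono_right
    (nhds_le_uniformity _)

noncomputable def hypergeomKernel (t s : ℝ) : ℝ :=
  8 * exp (3 * t) / (1 + 2 * exp t + exp (2 * t) * (1 - s ^ 2)) ^ 2 *
    hypergeom (3/2) (3/2) 2 (((1 - exp (-t)) ^ 2 - s ^ 2) / ((1 + exp (-t)) ^ 2 - s ^ 2))

theorem hypergeomKernel_eq (t s : ℝ) (hD : (1 + exp (-t)) ^ 2 - s ^ 2 ≠ 0) :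
    hypergeomKernel t s =
      let z := ((1 - exp (-t)) ^ 2 - s ^ 2) / ((1 + exp (-t)) ^ 2 - s ^ 2)
      2 * ((1 - z) * hypergeom (3/2) (3/2) 2 z) / ((1 + exp (-t)) ^ 2 - s ^ 2) := by
  have hu : exp t ≠ 0 := (exp_pos t).ne'
  have h2 : exp (2 * t) = exp t ^ 2 := by rw [← exp_nat_mul]; norm_num
  have h3 : exp (3 * t) = exp t ^ 3 := by rw [← exp_nat_mul]; norm_num
  have h1z : 1 - ((1 - exp (-t)) ^ 2 - s ^ 2) / ((1 + exp (-t)) ^ 2 - s ^ 2) =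
      4 * exp (-t) / ((1 + exp (-t)) ^ 2 - s ^ 2) := by
    field_simp
    ring
  have hden : 1 + 2 * exp t + exp (2 * t) * (1 - s ^ 2) =
      exp t ^ 2 * ((1 + exp (-t)) ^ 2 - s ^ 2) := by
    rw [exp_neg, h2]
    field_simp
    ring
  simp only [hypergeomKernel, h1z, hden, h3]
  generalize hypergeom _ _ _ _ = F
  rw [exp_neg] at hD ⊢
  field_simp
  ring

theorem tendsto_hypergeomKernel {s₀ : ℝ} (hs₀ : s₀ ∈ Set.Ioo (-1 : ℝ) 1) :
    Tendsto ↿hypergeomKernel (atTop ×ˢ 𝓝 s₀) (𝓝 (8 / (π * (1 - s₀ ^ 2)))) := by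
  have hs₀' : 0 < 1 - s₀ ^ 2 := by nlinarith [hs₀.1, hs₀.2]
  set x : ℝ × ℝ → ℝ := fun q => exp (-q.1)
  set D : ℝ × ℝ → ℝ := fun q => (1 + x q) ^ 2 - q.2 ^ 2
  set z : ℝ × ℝ → ℝ := fun q => ((1 - x q) ^ 2 - q.2 ^ 2) / D q
  have hx : Tendsto x (atTop ×ˢ 𝓝 s₀) (𝓝 0) := tendsto_exp_neg_atTop_nhds_zero.comp tendsto_fst
  have hD : Tendsto D (atTop ×ˢ 𝓝 s₀) (𝓝 (1 - s₀ ^ 2)) := by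
    simpa using ((hx.const_add 1).pow 2).sub (tendsto_snd.pow 2)
  have hD_pos : ∀ᶠ q in atTop ×ˢ 𝓝 s₀, 0 < D q := hD.eventually (lt_mem_nhds hs₀')
  have hz : Tendsto z (atTop ×ˢ 𝓝 s₀) (𝓝[<] 1) := by
    refine tendsto_nhdsWithin_iff.2 ⟨?_, ?_⟩
    · have := (((hx.const_sub 1).pow 2).sub (tendsto_snd.pow 2)).div hD hs₀'.ne'
      rwa [sub_zero, one_pow, div_self hs₀'.ne'] at this
    · filter_upwards [hD_pos] with q hq
      rw [Set.mem_Iio, div_lt_one hq]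
      nlinarith [exp_pos (-q.1)]
  have hlim := ((tendsto_one_sub_mul_hypergeom_three_halves.comp hz).const_mul 2).div hD hs₀'.ne'
  convert hlim.congr' ?_ using 2
  · field_simp
    ring
  · filter_upwards [hD_pos] with q hq
    exact (hypergeomKernel_eq q.1 q.2 hq.ne').symm

theorem tendstoUniformlyOn_hypergeomKernel {K : Set ℝ} (hK : IsCompact K)
    (hK_sub : K ⊆ Set.Ioo (-1) 1) :
    TendstoUniformlyOn hypergeomKernel (fun s => 8 / (π * (1 - s ^ 2))) atTop K := by
  have hpos : ∀ s ∈ K, 0 < 1 - s ^ 2 := fun s hs => by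
    nlinarith [(hK_sub hs).1, (hK_sub hs).2]
  refine hK.tendstoUniformlyOn_of_forall_tendsto ?_ fun s hs => ?_
  · exact continuousOn_const.div (by fun_prop) fun s hs => (mul_pos pi_pos (hpos s hs)).ne'
  · exact (tendsto_hypergeomKernel (hK_sub hs)).mono_left (prod_mono le_rfl nhdsWithin_le_nhds)

/-- For every `ε ∈ (0,1)`, as `t → +∞`, the functions
`s ↦ (8e^{3t}/(1 + 2e^t + e^{2t}(1−s²))²) · F(3/2, 3/2; 2; ((1−e^{−t})²−s²)/((1+e^{−t})²−s²))`
converge uniformly on `[0, 1−ε]` to `s ↦ 8/(π(1−s²))`. -/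
theorem stmt_5 (ε : ℝ) (hε : ε ∈ Set.Ioo (0:ℝ) 1) :
    TendstoUniformlyOn
      (fun (t : ℝ) (s : ℝ) =>
        (8 * Real.exp (3 * t) / (1 + 2 * Real.exp t + Real.exp (2 * t) * (1 - s ^ 2)) ^ 2) *
          hypergeom (3/2) (3/2) 2
            (((1 - Real.exp (-t)) ^ 2 - s ^ 2) / ((1 + Real.exp (-t)) ^ 2 - s ^ 2)))
      (fun s : ℝ => 8 / (π * (1 - s ^ 2)))
      atTop (Set.Icc 0 (1 - ε)) :=
  tendstoUniformlyOn_hypergeomKernel isCompact_Icc fun s hs =>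
    ⟨by linarith [hs.1], by linarith [hs.2, hε.1]⟩
end

section
/- (Asymptotic expansion at infinite time, n = 1, m = 0.) Let φ0, φ1 : ℝ → ℝ be smooth and compactly supported, and let Φ(x,t) := (1/2)(φ0(x − φ(t)) + φ0(x + φ(t))) + (1/2) ∫_{x−φ(t)}^{x+φ(t)} φ1(y) dy with φ(t) = 1 − e^{−t}. Define G(x,s) := (1/2)(φ0(x − s) + φ0(x + s)) + (1/2) ∫_{x−s}^{x+s} φ1(y) dy and a_k(x) := ((−1)^k / k!) · (∂/∂s)^k G(x,s) evaluated at s = 1. Then for every positive integer N there exists a constant C (depending on φ0, φ1 and N) such that sup_{x ∈ ℝ} | Φ(x,t) − Σ_{k=0}^{N−1} a_k(x) e^{−kt} | ≤ C e^{−Nt} for all t ≥ 0. -/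
open Real Set

private lemma itdw_eq' {f : ℝ → ℝ} (hf : ContDiff ℝ ((⊤:ℕ∞) : WithTop ℕ∞) f) {s : Set ℝ}
    (hs : UniqueDiffOn ℝ s) {x : ℝ} (hx : x ∈ s) (n : ℕ) :
    iteratedDerivWithin n f s x = iteratedDeriv n f x := by
  rw [iteratedDerivWithin_eq_iteratedFDerivWithin, iteratedDeriv_eq_iteratedFDeriv]
  congr 1
  have h : HasFTaylorSeriesUpTo ((⊤:ℕ∞) : WithTop ℕ∞) f (ftaylorSeries ℝ f) :=
    contDiff_iff_ftaylorSeries.mp hf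
  exact ((h.hasFTaylorSeriesUpToOn s).eq_iteratedFDerivWithin_of_uniqueDiffOn
    (by exact_mod_cast le_top) hs hx).symm

private lemma itd_add' {f g : ℝ → ℝ} {n : ℕ} (hf : ContDiff ℝ n f) (hg : ContDiff ℝ n g)
    (x : ℝ) :
    iteratedDeriv n (fun y => f y + g y) x = iteratedDeriv n f x + iteratedDeriv n g x := by
  simp only [iteratedDeriv_eq_iteratedFDeriv]
  rw [show (fun y => f y + g y) = f + g from rfl, iteratedFDeriv_add_apply hf.contDiffAt hg.contDiffAt]
  rfl

private lemma itd_cmul' {f : ℝ → ℝ} {n : ℕ} (hf : ContDiff ℝ n f) (c x : ℝ) :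
    iteratedDeriv n (fun y => c * f y) x = c * iteratedDeriv n f x := by
  simp only [iteratedDeriv_eq_iteratedFDeriv]
  rw [show (fun y => c * f y) = c • f from rfl, iteratedFDeriv_const_smul_apply hf.contDiffAt]
  rfl

private lemma itd_comp_sub' (f : ℝ → ℝ) (k : ℕ) (c y : ℝ) :
    iteratedDeriv k (fun v => f (c + -v)) y = (-1:ℝ)^k * iteratedDeriv k f (c + -y) := by
  have h := iteratedDeriv_comp_neg k (fun w => f (c + w)) y
  simp only [iteratedDeriv_comp_const_add, smul_eq_mul] at h
  exact h

/-- Asymptotic expansion at infinite time (`n = 1`, `m = 0`): for smooth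
compactly supported data `φ0, φ1`, with `φ(t) = 1 − e^{−t}`,
`Φ(x,t) = (1/2)(φ0(x−φ(t)) + φ0(x+φ(t))) + (1/2) ∫_{x−φ(t)}^{x+φ(t)} φ1`,
`G(x,s) = (1/2)(φ0(x−s) + φ0(x+s)) + (1/2) ∫_{x−s}^{x+s} φ1` and
`a_k(x) = ((−1)^k/k!) (∂/∂s)^k G(x,s)|_{s=1}`, for every positive integer `N`
there is a constant `C` with
`sup_x |Φ(x,t) − ∑_{k=0}^{N−1} a_k(x) e^{−kt}| ≤ C e^{−Nt}` for all `t ≥ 0`. -/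
theorem stmt_19 (φ0 φ1 : ℝ → ℝ)
    (h0 : ContDiff ℝ (⊤ : ℕ∞) φ0) (hc0 : HasCompactSupport φ0)
    (h1 : ContDiff ℝ (⊤ : ℕ∞) φ1) (hc1 : HasCompactSupport φ1)
    (Φ : ℝ → ℝ → ℝ)
    (hΦ : ∀ x t : ℝ, Φ x t =
      (1/2) * (φ0 (x - (1 - Real.exp (-t))) + φ0 (x + (1 - Real.exp (-t))))
        + (1/2) * ∫ y in (x - (1 - Real.exp (-t)))..(x + (1 - Real.exp (-t))), φ1 y)
    (G : ℝ → ℝ → ℝ)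
    (hG : ∀ x s : ℝ, G x s =
      (1/2) * (φ0 (x - s) + φ0 (x + s)) + (1/2) * ∫ y in (x - s)..(x + s), φ1 y)
    (a : ℕ → ℝ → ℝ)
    (ha : ∀ (k : ℕ) (x : ℝ), a k x =
      ((-1 : ℝ) ^ k / (Nat.factorial k : ℝ)) * iteratedDeriv k (fun s => G x s) 1)
    (N : ℕ) (hN : 0 < N) :
    ∃ C : ℝ, ∀ t : ℝ, 0 ≤ t → ∀ x : ℝ,
      |Φ x t - ∑ k ∈ Finset.range N, a k x * Real.exp (-(k : ℝ) * t)|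
        ≤ C * Real.exp (-(N : ℝ) * t) := by
  obtain ⟨n, rfl⟩ : ∃ n, N = n + 1 := ⟨N - 1, (Nat.succ_pred_eq_of_pos hN).symm⟩
  clear hN
  -- the antiderivative of φ1
  set Ψ : ℝ → ℝ := fun y => ∫ s in (0:ℝ)..y, φ1 s with hΨdef
  have hΨd : ∀ y : ℝ, HasDerivAt Ψ (φ1 y) y := fun y =>
    intervalIntegral.integral_hasDerivAt_right (h1.continuous.intervalIntegrable _ _)
      (h1.continuous.stronglyMeasurableAtFilter _ _) h1.continuous.continuousAt
  have hderivΨ : deriv Ψ = φ1 := funext fun y => (hΨd y).deriv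
  have hΨ : ContDiff ℝ ((⊤:ℕ∞) : WithTop ℕ∞) Ψ := by
    refine contDiff_infty_iff_deriv.mpr ⟨fun y => (hΨd y).differentiableAt, ?_⟩
    rw [hderivΨ]; exact h1.of_le (by simp)
  have hint : ∀ A B : ℝ, (∫ y in A..B, φ1 y) = Ψ B - Ψ A := fun A B => by
    rw [← intervalIntegral.integral_interval_sub_left
      (h1.continuous.intervalIntegrable 0 B) (h1.continuous.intervalIntegrable 0 A)]
  -- uniform bounds on iterated derivatives
  obtain ⟨M0, hM0⟩ := (hc0.iteratedFDeriv (n+1)).exists_bound_of_continuous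
    (h0.continuous_iteratedFDeriv (by exact_mod_cast le_top))
  obtain ⟨M1, hM1⟩ := (hc1.iteratedFDeriv n).exists_bound_of_continuous
    (h1.continuous_iteratedFDeriv (by exact_mod_cast le_top))
  have hb0 : ∀ y, |iteratedDeriv (n+1) φ0 y| ≤ M0 := fun y => by
    rw [← Real.norm_eq_abs, ← norm_iteratedFDeriv_eq_norm_iteratedDeriv]; exact hM0 y
  have hb1 : ∀ y, |iteratedDeriv n φ1 y| ≤ M1 := fun y => by
    rw [← Real.norm_eq_abs, ← norm_iteratedFDeriv_eq_norm_iteratedDeriv]; exact hM1 y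
  refine ⟨(M0 + M1) / n.factorial, ?_⟩
  intro t ht x
  set u := Real.exp (-t) with hu
  have hu0 : 0 < u := Real.exp_pos _
  have hu1 : u ≤ 1 := by
    rw [hu, show (1:ℝ) = Real.exp 0 by simp]
    exact Real.exp_le_exp.mpr (by linarith)
  -- auxiliary functions
  set g1 : ℝ → ℝ := fun v => φ0 ((x-1) + v) with hg1
  set g2 : ℝ → ℝ := fun v => φ0 ((x+1) + -v) with hg2
  set g3 : ℝ → ℝ := fun v => Ψ ((x+1) + -v) with hg3
  set g4 : ℝ → ℝ := fun v => Ψ ((x-1) + v) with hg4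
  set F : ℝ → ℝ := fun v =>
    (1/2) * g1 v + ((1/2) * g2 v + ((1/2) * g3 v + (-(1/2)) * g4 v)) with hF
  have h0' : ContDiff ℝ ((⊤:ℕ∞) : WithTop ℕ∞) φ0 := h0.of_le (by simp)
  have cadd : ∀ c : ℝ, ContDiff ℝ ((⊤:ℕ∞) : WithTop ℕ∞) (fun v : ℝ => c + v) :=
    fun c => contDiff_const.add contDiff_id
  have csub : ∀ c : ℝ, ContDiff ℝ ((⊤:ℕ∞) : WithTop ℕ∞) (fun v : ℝ => c + -v) :=
    fun c => contDiff_const.add contDiff_id.neg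
  have hg1s : ContDiff ℝ ((⊤:ℕ∞) : WithTop ℕ∞) g1 := h0'.comp (cadd _)
  have hg2s : ContDiff ℝ ((⊤:ℕ∞) : WithTop ℕ∞) g2 := h0'.comp (csub _)
  have hg3s : ContDiff ℝ ((⊤:ℕ∞) : WithTop ℕ∞) g3 := hΨ.comp (csub _)
  have hg4s : ContDiff ℝ ((⊤:ℕ∞) : WithTop ℕ∞) g4 := hΨ.comp (cadd _)
  have hFs : ContDiff ℝ ((⊤:ℕ∞) : WithTop ℕ∞) F :=
    (contDiff_const.mul hg1s).add ((contDiff_const.mul hg2s).add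
      ((contDiff_const.mul hg3s).add (contDiff_const.mul hg4s)))
  have hcast : ∀ m : ℕ, ((m:ℕ∞) : WithTop ℕ∞) ≤ ((⊤:ℕ∞) : WithTop ℕ∞) := fun m => by
    exact_mod_cast le_top
  -- iterated derivatives of F at 0 in terms of those of G x at 1
  have hFd : ∀ k : ℕ, iteratedDeriv k F 0
      = (-1:ℝ)^k * iteratedDeriv k (fun s => G x s) 1 := by
    intro k
    have e : F = fun v => G x (1 + -v) := by
      funext v
      rw [hG, hint]
      simp only [hF, hg1, hg2, hg3, hg4]
      have e1 : x - (1 + -v) = (x-1) + v := by ring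
      have e2 : x + (1 + -v) = (x+1) + -v := by ring
      rw [e1, e2]; ring
    rw [e, itd_comp_sub' (fun s => G x s) k 1 0]
    norm_num
  -- the value of Φ
  have hΦF : Φ x t = F u := by
    rw [hΦ x t, hint, ← hu]
    simp only [hF, hg1, hg2, hg3, hg4]
    have e1 : x - (1 - u) = (x-1) + u := by ring
    have e2 : x + (1 - u) = (x+1) + -u := by ring
    rw [e1, e2]; ring
  -- the Taylor polynomial
  have hmem0 : (0:ℝ) ∈ Icc (0:ℝ) 1 := left_mem_Icc.mpr zero_le_one
  have hud : UniqueDiffOn ℝ (Icc (0:ℝ) 1) := uniqueDiffOn_Icc one_pos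
  have hsum : ∑ k ∈ Finset.range (n+1), a k x * Real.exp (-(k:ℝ) * t)
      = taylorWithinEval F n (Icc 0 1) 0 u := by
    rw [taylor_within_apply]
    refine Finset.sum_congr rfl fun k _ => ?_
    rw [itdw_eq' hFs hud hmem0 k, hFd k, ha]
    have he : Real.exp (-(k:ℝ) * t) = u ^ k := by
      rw [show -(k:ℝ) * t = (k:ℝ) * (-t) by ring, Real.exp_nat_mul]
    rw [he, smul_eq_mul, sub_zero]
    ring
  -- uniform bound on the (n+1)-st derivative of F
  have hC : ∀ y ∈ Icc (0:ℝ) 1, ‖iteratedDerivWithin (n+1) F (Icc 0 1) y‖ ≤ M0 + M1 := by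
    intro y hy
    rw [itdw_eq' hFs hud hy, Real.norm_eq_abs]
    have hΨit : ∀ z : ℝ, iteratedDeriv (n+1) Ψ z = iteratedDeriv n φ1 z := by
      intro z; rw [iteratedDeriv_succ', hderivΨ]
    have d1 : iteratedDeriv (n+1) g1 y = iteratedDeriv (n+1) φ0 ((x-1) + y) := by
      rw [hg1]; simp only [iteratedDeriv_comp_const_add]
    have d2 : iteratedDeriv (n+1) g2 y
        = (-1:ℝ)^(n+1) * iteratedDeriv (n+1) φ0 ((x+1) + -y) := by
      rw [hg2, itd_comp_sub' φ0 (n+1) (x+1) y]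
    have d3 : iteratedDeriv (n+1) g3 y
        = (-1:ℝ)^(n+1) * iteratedDeriv n φ1 ((x+1) + -y) := by
      rw [hg3, itd_comp_sub' Ψ (n+1) (x+1) y, hΨit]
    have d4 : iteratedDeriv (n+1) g4 y = iteratedDeriv n φ1 ((x-1) + y) := by
      rw [hg4]; simp only [iteratedDeriv_comp_const_add]; exact hΨit _
    have c1 := hg1s.of_le (hcast (n+1))
    have c2 := hg2s.of_le (hcast (n+1))
    have c3 := hg3s.of_le (hcast (n+1))
    have c4 := hg4s.of_le (hcast (n+1))
    have hsplit : iteratedDeriv (n+1) F y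
        = (1/2) * iteratedDeriv (n+1) g1 y + ((1/2) * iteratedDeriv (n+1) g2 y
          + ((1/2) * iteratedDeriv (n+1) g3 y + (-(1/2)) * iteratedDeriv (n+1) g4 y)) := by
      rw [hF]
      rw [itd_add' (contDiff_const.mul c1) ((contDiff_const.mul c2).add
        ((contDiff_const.mul c3).add (contDiff_const.mul c4))),
        itd_add' (contDiff_const.mul c2) ((contDiff_const.mul c3).add (contDiff_const.mul c4)),
        itd_add' (contDiff_const.mul c3) (contDiff_const.mul c4),
        itd_cmul' c1, itd_cmul' c2, itd_cmul' c3, itd_cmul' c4]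
    rw [hsplit, d1, d2, d3, d4]
    have b1 := hb0 ((x-1) + y)
    have b2 := hb0 ((x+1) + -y)
    have b3 := hb1 ((x+1) + -y)
    have b4 := hb1 ((x-1) + y)
    have habs : |(-1:ℝ)^(n+1)| = 1 := by
      rw [abs_pow, abs_neg, abs_one, one_pow]
    have habs3 : ∀ p q r s : ℝ, |p + (q + (r + s))| ≤ |p| + (|q| + (|r| + |s|)) :=
      fun p q r s => (abs_add_le p (q+(r+s))).trans (add_le_add_right
        ((abs_add_le q (r+s)).trans (add_le_add_right (abs_add_le r s) _)) _)
    refine le_trans (habs3 _ _ _ _) ?_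
    have hA : |(1/2) * iteratedDeriv (n+1) φ0 ((x-1) + y)| ≤ (1/2) * M0 := by
      rw [abs_mul, show |(1/2 : ℝ)| = 1/2 by norm_num]
      exact mul_le_mul_of_nonneg_left b1 (by norm_num)
    have hB : |(1/2) * ((-1:ℝ)^(n+1) * iteratedDeriv (n+1) φ0 ((x+1) + -y))| ≤ (1/2) * M0 := by
      rw [abs_mul, abs_mul, habs, one_mul, show |(1/2 : ℝ)| = 1/2 by norm_num]
      exact mul_le_mul_of_nonneg_left b2 (by norm_num)
    have hC3 : |(1/2) * ((-1:ℝ)^(n+1) * iteratedDeriv n φ1 ((x+1) + -y))| ≤ (1/2) * M1 := by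
      rw [abs_mul, abs_mul, habs, one_mul, show |(1/2 : ℝ)| = 1/2 by norm_num]
      exact mul_le_mul_of_nonneg_left b3 (by norm_num)
    have hD : |(-(1/2)) * iteratedDeriv n φ1 ((x-1) + y)| ≤ (1/2) * M1 := by
      rw [abs_mul, show |(-(1/2) : ℝ)| = 1/2 by norm_num]
      exact mul_le_mul_of_nonneg_left b4 (by norm_num)
    linarith
  -- Taylor's theorem with remainder bound
  have hFcd : ContDiffOn ℝ (n+1) F (Icc (0:ℝ) 1) := (hFs.of_le (hcast (n+1))).contDiffOn
  have hrem := taylor_mean_remainder_bound (zero_le_one) hFcd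
    (⟨hu0.le, hu1⟩ : u ∈ Icc (0:ℝ) 1) hC
  rw [hΦF, hsum]
  have hend : (M0 + M1) * (u - 0) ^ (n+1) / n.factorial
      = (M0 + M1) / n.factorial * Real.exp (-((n:ℝ)+1) * t) := by
    have hh : Real.exp (-((n:ℝ)+1) * t) = u ^ (n+1) := by
      rw [show -((n:ℝ)+1) * t = ((n+1 : ℕ) : ℝ) * (-t) by push_cast; ring, Real.exp_nat_mul]
    rw [hh, sub_zero]; ring
  rw [← Real.norm_eq_abs]
  refine hrem.trans ?_
  rw [hend]
  push_cast
  ring_nf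
  rfl
end
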